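/- arXiv:1810.06346 — 2 statements merged into one kernel-verified Lean document; each statement's English description precedes it below -/
import Mathlib

section
/- Let α, β, α₁, α₂, α₃, β₁, β₂, β₃ be complex numbers satisfying the two relations i·α₁ − β₂ + i·β₃ = 0 and −i·β₁ + α₂ + i·α₃ = 0. Then −Re(α₂·conj(α) − β₂·conj(β)) − Im(conj(α₁)·β + conj(α)·β₁) = −Im(α₃·conj(α) + β₃·conj(β)). -/
open Complex

/-- The key computation in the lemma `∗dξ = i·Im⟨Ψ, ∇_B Ψ⟩`: assuming the two
components of the Dirac equation `D_B Ψ = 0`, the `−i e¹∧e²` component of `dξ`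
equals `−Im(α₃·conj(α) + β₃·conj(β))`. -/
theorem dirac_component_identity (α β α₁ α₂ α₃ β₁ β₂ β₃ : ℂ)
    (h1 : I * α₁ - β₂ + I * β₃ = 0)
    (h2 : -I * β₁ + α₂ + I * α₃ = 0) :
    -(α₂ * (starRingEnd ℂ) α - β₂ * (starRingEnd ℂ) β).re
      - ((starRingEnd ℂ) α₁ * β + (starRingEnd ℂ) α * β₁).im
    = -(α₃ * (starRingEnd ℂ) α + β₃ * (starRingEnd ℂ) β).im := by
  have h1' := congrArg Complex.re h1
  have h1'' := congrArg Complex.im h1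
  have h2' := congrArg Complex.re h2
  have h2'' := congrArg Complex.im h2
  simp [Complex.ext_iff, Complex.add_re, Complex.add_im, Complex.mul_re, Complex.mul_im] at h1' h1'' h2' h2'' ⊢
  linear_combination -β.re * h1' - β.im * h1'' - α.re * h2' - α.im * h2''
end

section
/- Let δ > 5/2 and D > 0, and let (t_n)_{n ∈ ℕ} be a sequence of nonnegative real numbers such that for every natural number N, the number of indices n with t_n ∈ [N, N+1) is at most D·(N+1)². Then there exists a constant C > 0, depending only on δ and D, with the following property: for every continuously differentiable function g : ℝ → ℂ satisfying ∫_ℝ (|g(t)|² + |g'(t)|²)·(1 + t²)^{δ} dt < ∞, the series ∑_n |g(t_n)| converges and ∑_n |g(t_n)| ≤ C · ( ∫_ℝ (|g(t)|² + |g'(t)|²)·(1 + t²)^{δ} dt )^{1/2}. -/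
/-!
On a unit interval `[a, a + 1]` a `C¹` function satisfies `‖g x‖² ≤ 2 ∫ (‖g‖² + ‖g'‖²)`:
compare `‖g‖²` at `x` with its minimum on the interval and integrate `(‖g‖²)' = 2 ⟪g, g'⟫`.
On `[N, N + 1]` the weight `(1 + s²)^δ` is at least `((N + 1)² / 2)^δ`, so each of the at most
`D (N + 1)²` points `t n ∈ [N, N + 1)` contributes `O((N + 1)^(-δ) √J_N)`, where `J_N` is the
weighted integral over `[N, N + 1]`. Cauchy–Schwarz bounds `∑ (N + 1)^(2 - δ) √J_N` by
`(∑ (N + 1)^(4 - 2δ))^(1/2) (∑ J_N)^(1/2)`, and the first series converges because `δ > 5/2`.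
-/

open MeasureTheory Real Set

theorem le_inv_mul_integral_add_integral_abs_deriv {F F' : ℝ → ℝ}
    (hF : ∀ s, HasDerivAt F (F' s) s) {a b : ℝ} (hab : a < b)
    (hF' : IntervalIntegrable F' volume a b) {x : ℝ} (hx : x ∈ Icc a b) :
    F x ≤ (b - a)⁻¹ * (∫ s in a..b, F s) + ∫ s in a..b, |F' s| := by
  have hFc : Continuous F := continuous_iff_continuousAt.2 fun s => (hF s).continuousAt
  obtain ⟨y, hy, hmin⟩ :=
    isCompact_Icc.exists_isMinOn (nonempty_Icc.2 hab.le) hFc.continuousOn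
  have hFy : F y ≤ (b - a)⁻¹ * ∫ s in a..b, F s := by
    rw [le_inv_mul_iff₀ (sub_pos.2 hab)]
    calc (b - a) * F y = ∫ _ in a..b, F y := by simp
      _ ≤ ∫ s in a..b, F s := intervalIntegral.integral_mono_on hab.le
          intervalIntegrable_const (hFc.intervalIntegrable a b) fun s hs => hmin hs
  have hsub : uIoc y x ⊆ Ioc a b := Ioc_subset_Ioc (le_min hy.1 hx.1) (max_le hy.2 hx.2)
  have hvar : F x - F y ≤ ∫ s in a..b, |F' s| :=
    calc F x - F y = ∫ s in y..x, F' s :=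
          (intervalIntegral.integral_eq_sub_of_hasDerivAt (fun s _ => hF s)
            (hF'.mono_set (uIcc_subset_uIcc (Icc_subset_uIcc hy) (Icc_subset_uIcc hx)))).symm
      _ ≤ ‖∫ s in y..x, F' s‖ := le_norm_self _
      _ ≤ ∫ s in uIoc y x, ‖F' s‖ := intervalIntegral.norm_integral_le_integral_norm_uIoc
      _ ≤ ∫ s in Ioc a b, ‖F' s‖ :=
          setIntegral_mono_set (hF'.1.norm) (.of_forall fun _ => norm_nonneg _)
            (.of_forall hsub)
      _ = ∫ s in a..b, |F' s| := (intervalIntegral.integral_of_le hab.le).symm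
  linarith

theorem sq_norm_le_two_mul_integral_of_mem_Icc {E : Type*} [NormedAddCommGroup E]
    [InnerProductSpace ℝ E] {g : ℝ → E} (hg : ContDiff ℝ 1 g) {a x : ℝ}
    (hx : x ∈ Icc a (a + 1)) :
    ‖g x‖ ^ 2 ≤ 2 * ∫ s in a..a + 1, (‖g s‖ ^ 2 + ‖deriv g s‖ ^ 2) := by
  have hgc : Continuous g := hg.continuous
  have hg'c : Continuous (deriv g) := hg.continuous_deriv le_rfl
  have hderiv : ∀ s, HasDerivAt (‖g ·‖ ^ 2) (2 * inner ℝ (g s) (deriv g s)) s := fun s =>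
    ((hg.differentiable one_ne_zero) s).hasDerivAt.norm_sq
  have hdensity : Continuous fun s => ‖g s‖ ^ 2 + ‖deriv g s‖ ^ 2 := by fun_prop
  have hsobolev := le_inv_mul_integral_add_integral_abs_deriv hderiv (by linarith)
    ((continuous_const.mul (hgc.inner hg'c)).intervalIntegrable _ _) hx
  have hvalue : ∫ s in a..a + 1, ‖g s‖ ^ 2 ≤ ∫ s in a..a + 1, (‖g s‖ ^ 2 + ‖deriv g s‖ ^ 2) :=
    intervalIntegral.integral_mono_on (by linarith) ((hgc.norm.pow 2).intervalIntegrable _ _)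
      (hdensity.intervalIntegrable _ _) fun s _ => le_add_of_nonneg_right (by positivity)
  have hslope : ∫ s in a..a + 1, |2 * inner ℝ (g s) (deriv g s)|
      ≤ ∫ s in a..a + 1, (‖g s‖ ^ 2 + ‖deriv g s‖ ^ 2) := by
    refine intervalIntegral.integral_mono_on (by linarith)
      ((continuous_const.mul (hgc.inner hg'c)).abs.intervalIntegrable _ _)
      (hdensity.intervalIntegrable _ _) fun s _ => ?_
    calc |2 * inner ℝ (g s) (deriv g s)| ≤ 2 * ‖g s‖ * ‖deriv g s‖ := by
          rw [abs_mul, abs_two, mul_assoc]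
          gcongr
          exact abs_real_inner_le_norm _ _
      _ ≤ ‖g s‖ ^ 2 + ‖deriv g s‖ ^ 2 := two_mul_le_add_sq _ _
  simp only [add_sub_cancel_left, inv_one, one_mul] at hsobolev
  linarith

theorem half_sq_add_one_le_one_add_sq {a s : ℝ} (ha : 0 ≤ a) (hs : a ≤ s) :
    (a + 1) ^ 2 / 2 ≤ 1 + s ^ 2 := by
  nlinarith [sq_nonneg (a - 1)]

theorem sq_norm_le_weighted_integral_of_mem_Icc {E : Type*} [NormedAddCommGroup E]
    [InnerProductSpace ℝ E] {g : ℝ → E} (hg : ContDiff ℝ 1 g) {δ : ℝ} (hδ : 0 ≤ δ) {a x : ℝ}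
    (ha : 0 ≤ a) (hx : x ∈ Icc a (a + 1)) :
    ‖g x‖ ^ 2 ≤ 2 / ((a + 1) ^ 2 / 2) ^ δ *
      ∫ s in a..a + 1, (‖g s‖ ^ 2 + ‖deriv g s‖ ^ 2) * (1 + s ^ 2) ^ δ := by
  have hm : 0 < ((a + 1) ^ 2 / 2) ^ δ := by positivity
  have hdensity : Continuous fun s => ‖g s‖ ^ 2 + ‖deriv g s‖ ^ 2 := by
    have := hg.continuous_deriv le_rfl
    fun_prop
  have hweight : Continuous fun s : ℝ => (1 + s ^ 2) ^ δ :=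
    (continuous_const.add (continuous_pow 2)).rpow_const fun _ => Or.inr hδ
  have hpointwise : ∀ s ∈ Icc a (a + 1), ‖g s‖ ^ 2 + ‖deriv g s‖ ^ 2 ≤
      (‖g s‖ ^ 2 + ‖deriv g s‖ ^ 2) * (1 + s ^ 2) ^ δ / ((a + 1) ^ 2 / 2) ^ δ := fun s hs => by
    rw [le_div_iff₀ hm]
    gcongr
    exact half_sq_add_one_le_one_add_sq ha hs.1
  calc ‖g x‖ ^ 2 ≤ 2 * ∫ s in a..a + 1, (‖g s‖ ^ 2 + ‖deriv g s‖ ^ 2) :=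
        sq_norm_le_two_mul_integral_of_mem_Icc hg hx
    _ ≤ 2 * ∫ s in a..a + 1,
          (‖g s‖ ^ 2 + ‖deriv g s‖ ^ 2) * (1 + s ^ 2) ^ δ / ((a + 1) ^ 2 / 2) ^ δ := by
        gcongr
        exact intervalIntegral.integral_mono_on (by linarith) (hdensity.intervalIntegrable _ _)
          (((hdensity.mul hweight).div_const _).intervalIntegrable _ _) hpointwise
    _ = _ := by rw [intervalIntegral.integral_div]; ring

theorem summable_and_tsum_sqrt_mul_sqrt_le {x y : ℕ → ℝ} (hx0 : 0 ≤ x) (hy0 : 0 ≤ y)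
    (hx : Summable x) (hy : Summable y) :
    (Summable fun N => √(x N) * √(y N)) ∧
      ∑' N, √(x N) * √(y N) ≤ √(∑' N, x N) * √(∑' N, y N) := by
  have hpartial (m : ℕ) :
      ∑ N ∈ Finset.range m, √(x N) * √(y N) ≤ √(∑' N, x N) * √(∑' N, y N) :=
    (Real.sum_sqrt_mul_sqrt_le _ hx0 hy0).trans <| by
      gcongr
      exacts [hx.sum_le_tsum _ fun N _ => hx0 N, hy.sum_le_tsum _ fun N _ => hy0 N]
  have hnonneg (N : ℕ) : 0 ≤ √(x N) * √(y N) := by positivity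
  exact ⟨summable_of_sum_range_le hnonneg hpartial, Real.tsum_le_of_sum_range_le hnonneg hpartial⟩

theorem summable_and_tsum_intervalIntegral_le_integral {w : ℝ → ℝ} (hw0 : 0 ≤ w)
    (hw : Integrable w) :
    (Summable fun N : ℕ => ∫ s in (N : ℝ)..N + 1, w s) ∧
      ∑' N : ℕ, ∫ s in (N : ℝ)..N + 1, w s ≤ ∫ s, w s := by
  have hnonneg (N : ℕ) : 0 ≤ ∫ s in (N : ℝ)..N + 1, w s :=
    intervalIntegral.integral_nonneg (by linarith) fun s _ => hw0 s
  have hpartial (m : ℕ) : ∑ N ∈ Finset.range m, ∫ s in (N : ℝ)..N + 1, w s ≤ ∫ s, w s := by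
    have hadjacent := intervalIntegral.sum_integral_adjacent_intervals (a := fun N : ℕ => (N : ℝ))
      (n := m) fun N _ => hw.intervalIntegrable
    push_cast at hadjacent
    rw [hadjacent, intervalIntegral.integral_of_le m.cast_nonneg]
    exact setIntegral_le_integral hw (.of_forall hw0)
  exact ⟨summable_of_sum_range_le hnonneg hpartial, Real.tsum_le_of_sum_range_le hnonneg hpartial⟩

theorem summable_and_tsum_le_of_card_level_le {t : ℕ → ℝ} (ht : ∀ n, 0 ≤ t n)
    (hfin : ∀ N : ℕ, {n : ℕ | t n ∈ Ico (N : ℝ) (N + 1)}.Finite) {c b : ℕ → ℝ}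
    (hcard : ∀ N, ((hfin N).toFinset.card : ℝ) ≤ c N) (hb : 0 ≤ b)
    (hcb : Summable fun N => c N * b N) {F : ℝ → ℝ} (hF0 : 0 ≤ F)
    (hF : ∀ N : ℕ, ∀ x ∈ Ico (N : ℝ) (N + 1), F x ≤ b N) :
    (Summable fun n => F (t n)) ∧ ∑' n, F (t n) ≤ ∑' N, c N * b N := by
  classical
  have hlevel (n : ℕ) : t n ∈ Ico (⌊t n⌋₊ : ℝ) (⌊t n⌋₊ + 1) :=
    ⟨Nat.floor_le (ht n), Nat.lt_floor_add_one _⟩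
  have hcb0 (N : ℕ) : 0 ≤ c N * b N :=
    mul_nonneg ((Nat.cast_nonneg _).trans (hcard N)) (hb N)
  have hfiber (u : Finset ℕ) (N : ℕ) :
      ∑ n ∈ u with ⌊t n⌋₊ = N, F (t n) ≤ c N * b N := by
    have hsub : {n ∈ u | ⌊t n⌋₊ = N} ⊆ (hfin N).toFinset := fun n hn => by
      obtain ⟨-, rfl⟩ := Finset.mem_filter.1 hn
      simpa using hlevel n
    calc ∑ n ∈ u with ⌊t n⌋₊ = N, F (t n) ≤ ({n ∈ u | ⌊t n⌋₊ = N} : Finset ℕ).card • b N :=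
          Finset.sum_le_card_nsmul _ _ _ fun n hn => by
            obtain ⟨-, rfl⟩ := Finset.mem_filter.1 hn
            exact hF _ _ (hlevel n)
      _ ≤ c N * b N := by
          rw [nsmul_eq_mul]
          gcongr
          · exact hb N
          · exact le_trans (by exact_mod_cast Finset.card_le_card hsub) (hcard N)
  have hpartial (m : ℕ) : ∑ n ∈ Finset.range m, F (t n) ≤ ∑' N, c N * b N :=
    calc ∑ n ∈ Finset.range m, F (t n)
        = ∑ N ∈ (Finset.range m).image (⌊t ·⌋₊), ∑ n ∈ Finset.range m with ⌊t n⌋₊ = N, F (t n) :=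
          (Finset.sum_fiberwise_of_maps_to (fun n hn => Finset.mem_image_of_mem _ hn) _).symm
      _ ≤ ∑ N ∈ (Finset.range m).image (⌊t ·⌋₊), c N * b N :=
          Finset.sum_le_sum fun N _ => hfiber _ N
      _ ≤ ∑' N, c N * b N := hcb.sum_le_tsum _ fun N _ => hcb0 N
  have hnonneg (n : ℕ) : 0 ≤ F (t n) := hF0 _
  exact ⟨summable_of_sum_range_le hnonneg hpartial, Real.tsum_le_of_sum_range_le hnonneg hpartial⟩

theorem summable_pow_div_rpow_half_sq {k : ℕ} {δ : ℝ} (hδ : (k : ℝ) + 1 < 2 * δ) :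
    Summable fun N : ℕ => ((N : ℝ) + 1) ^ k / (((N : ℝ) + 1) ^ 2 / 2) ^ δ := by
  have hrpow : Summable fun N : ℕ => ((N : ℝ) + 1) ^ ((k : ℝ) - 2 * δ) := by
    simpa using (summable_nat_add_iff 1).2
      (Real.summable_nat_rpow.2 (by linarith : (k : ℝ) - 2 * δ < -1))
  refine (hrpow.mul_left (2 ^ δ)).congr fun N => ?_
  have hN : (0 : ℝ) < N + 1 := by positivity
  rw [div_rpow (by positivity) zero_le_two, ← rpow_natCast_mul hN.le, rpow_sub hN, rpow_natCast]
  push_cast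
  field_simp

/-- Continuity of the spectral linear functional on a weighted Sobolev space:
given the local Weyl law bound on the `t_n`, there is `C = C(δ, D) > 0` such that
for every `C¹` function `g` with `∫ (|g|² + |g'|²)(1+t²)^δ < ∞`, the series
`∑ |g(t_n)|` converges and is at most `C · (∫ (|g|² + |g'|²)(1+t²)^δ)^{1/2}`. -/
theorem spectral_functional_continuous (δ D : ℝ) (hδ : 5 / 2 < δ) (hD : 0 < D)
    (t : ℕ → ℝ) (ht : ∀ n, 0 ≤ t n)
    (hfin : ∀ N : ℕ, {n : ℕ | t n ∈ Set.Ico (N : ℝ) ((N : ℝ) + 1)}.Finite)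
    (hcard : ∀ N : ℕ, ((hfin N).toFinset.card : ℝ) ≤ D * ((N : ℝ) + 1) ^ 2) :
    ∃ C : ℝ, 0 < C ∧
      ∀ g : ℝ → ℂ, ContDiff ℝ 1 g →
        Integrable (fun s => (‖g s‖ ^ 2 + ‖deriv g s‖ ^ 2) * (1 + s ^ 2) ^ δ) →
        (Summable fun n => ‖g (t n)‖) ∧
          ∑' n, ‖g (t n)‖ ≤
            C * Real.sqrt (∫ s : ℝ, (‖g s‖ ^ 2 + ‖deriv g s‖ ^ 2) * (1 + s ^ 2) ^ δ) := by
  -- `κ N` is the square of the coefficient of `√J_N` in the bound for the level `[N, N + 1)`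
  set κ : ℕ → ℝ := fun N => D ^ 2 * 2 * (((N : ℝ) + 1) ^ 4 / (((N : ℝ) + 1) ^ 2 / 2) ^ δ)
  have hκ0 : 0 ≤ κ := fun N => by positivity
  have hκ : Summable κ :=
    (summable_pow_div_rpow_half_sq (k := 4) (by norm_num; linarith)).mul_left _
  refine ⟨√(∑' N, κ N), sqrt_pos.2 (hκ.tsum_pos hκ0 0 (by positivity)), fun g hg hw => ?_⟩
  set J : ℕ → ℝ := fun N =>
    ∫ s in (N : ℝ)..N + 1, (‖g s‖ ^ 2 + ‖deriv g s‖ ^ 2) * (1 + s ^ 2) ^ δ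
  have hJ0 : 0 ≤ J := fun N =>
    intervalIntegral.integral_nonneg (by linarith) fun s _ => by positivity
  obtain ⟨hJ, hJ_le⟩ := summable_and_tsum_intervalIntegral_le_integral (fun s => by positivity) hw
  obtain ⟨hκJ, hκJ_le⟩ := summable_and_tsum_sqrt_mul_sqrt_le hκ0 hJ0 hκ hJ
  have hcb : ∀ N : ℕ, D * ((N : ℝ) + 1) ^ 2 * √(2 / (((N : ℝ) + 1) ^ 2 / 2) ^ δ * J N) =
      √(κ N) * √(J N) := fun N => by
    rw [← sqrt_mul (hκ0 N), ← sqrt_sq (by positivity : 0 ≤ D * ((N : ℝ) + 1) ^ 2),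
      ← sqrt_mul (by positivity)]
    congr 1
    simp only [κ]
    ring
  obtain ⟨hsum, hsum_le⟩ := summable_and_tsum_le_of_card_level_le ht hfin hcard
    (b := fun N => √(2 / (((N : ℝ) + 1) ^ 2 / 2) ^ δ * J N)) (fun N => sqrt_nonneg _)
    (hκJ.congr fun N => (hcb N).symm) (fun x => norm_nonneg (g x))
    fun N x hx => le_sqrt_of_sq_le <| sq_norm_le_weighted_integral_of_mem_Icc hg (by linarith)
      N.cast_nonneg (Ico_subset_Icc_self hx)
  refine ⟨hsum, hsum_le.trans ((tsum_congr hcb).trans_le (hκJ_le.trans ?_))⟩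
  gcongr
end
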